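/- Let a_1, a_2, b_1, b_2, c_1, c_2 be vectors in ℝ^4 spanning 2-dimensional subspaces A, B, C. Define the quadratic form Q on ℝ^4 by Q(x) := ⟨a_1 a_2 x b_1⟩⟨b_2 c_1 c_2 x⟩ − ⟨a_1 a_2 x b_2⟩⟨b_1 c_1 c_2 x⟩. Then Q(x) = 0 for every x in A ∪ B ∪ C. Moreover, if the three lines are pairwise skew, i.e. ⟨a_1 a_2 b_1 b_2⟩ ≠ 0, ⟨a_1 a_2 c_1 c_2⟩ ≠ 0 and ⟨b_1 b_2 c_1 c_2⟩ ≠ 0, then Q is not identically zero and every quadratic form on ℝ^4 vanishing identically on A ∪ B ∪ C is a scalar multiple of Q; that is, Q defines the unique quadric surface in projective 3-space containing the three pairwise skew lines A, B, C. -/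

import Mathlib

private theorem det_fin_four' (A : Matrix (Fin 4) (Fin 4) ℝ) :
    Matrix.det A =
      A 0 0*A 1 1*A 2 2*A 3 3
      - A 0 0*A 1 1*A 2 3*A 3 2
      - A 0 0*A 1 2*A 2 1*A 3 3
      + A 0 0*A 1 2*A 2 3*A 3 1
      + A 0 0*A 1 3*A 2 1*A 3 2
      - A 0 0*A 1 3*A 2 2*A 3 1
      - A 0 1*A 1 0*A 2 2*A 3 3
      + A 0 1*A 1 0*A 2 3*A 3 2
      + A 0 1*A 1 2*A 2 0*A 3 3
      - A 0 1*A 1 2*A 2 3*A 3 0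
      - A 0 1*A 1 3*A 2 0*A 3 2
      + A 0 1*A 1 3*A 2 2*A 3 0
      + A 0 2*A 1 0*A 2 1*A 3 3
      - A 0 2*A 1 0*A 2 3*A 3 1
      - A 0 2*A 1 1*A 2 0*A 3 3
      + A 0 2*A 1 1*A 2 3*A 3 0
      + A 0 2*A 1 3*A 2 0*A 3 1
      - A 0 2*A 1 3*A 2 1*A 3 0
      - A 0 3*A 1 0*A 2 1*A 3 2
      + A 0 3*A 1 0*A 2 2*A 3 1
      + A 0 3*A 1 1*A 2 0*A 3 2
      - A 0 3*A 1 1*A 2 2*A 3 0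
      - A 0 3*A 1 2*A 2 0*A 3 1
      + A 0 3*A 1 2*A 2 1*A 3 0 := by
  rw [Matrix.det_succ_row_zero]
  simp only [Fin.sum_univ_succ, Matrix.det_fin_three, Matrix.submatrix_apply,
    Fin.succ_zero_eq_one, Fin.succ_one_eq_two, Fin.zero_succAbove, Fin.succ_succAbove_zero,
    Fin.succ_succAbove_one, Fin.val_zero, Fin.val_succ, Finset.univ_unique, Finset.sum_singleton,
    Fin.default_eq_zero, Fin.val_eq_zero, pow_succ, pow_zero]
  simp only [show (Fin.succ 2 : Fin 4) = 3 from rfl,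
    show ((1:Fin 4).succAbove 2 : Fin 4) = 3 from rfl,
    show ((2:Fin 4).succAbove 2 : Fin 4) = 3 from rfl,
    show ((3:Fin 4).succAbove 2 : Fin 4) = 2 from rfl,
    show (Fin.castSucc 2 : Fin 4) = 2 from rfl]
  norm_num
  ring




/-- The determinant of the 4×4 matrix with columns `w, x, y, z`. -/
def det4 (w x y z : Fin 4 → ℝ) : ℝ :=
  Matrix.det (Matrix.of fun i j => ![w, x, y, z] j i)

/-- The quadratic form `Q(x) = ⟨a₁ a₂ x b₁⟩⟨b₂ c₁ c₂ x⟩ − ⟨a₁ a₂ x b₂⟩⟨b₁ c₁ c₂ x⟩`,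
written `⟨Ax|B|Cx⟩` in Grassmann–Cayley chain notation. -/
def quadThreeLines (a1 a2 b1 b2 c1 c2 : Fin 4 → ℝ) (x : Fin 4 → ℝ) : ℝ :=
  det4 a1 a2 x b1 * det4 b2 c1 c2 x - det4 a1 a2 x b2 * det4 b1 c1 c2 x

private lemma det4_eq (w x y z : Fin 4 → ℝ) :
    det4 w x y z =
      w 0*x 1*y 2*z 3
      - w 0*x 1*z 2*y 3
      - w 0*y 1*x 2*z 3
      + w 0*y 1*z 2*x 3
      + w 0*z 1*x 2*y 3
      - w 0*z 1*y 2*x 3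
      - x 0*w 1*y 2*z 3
      + x 0*w 1*z 2*y 3
      + x 0*y 1*w 2*z 3
      - x 0*y 1*z 2*w 3
      - x 0*z 1*w 2*y 3
      + x 0*z 1*y 2*w 3
      + y 0*w 1*x 2*z 3
      - y 0*w 1*z 2*x 3
      - y 0*x 1*w 2*z 3
      + y 0*x 1*z 2*w 3
      + y 0*z 1*w 2*x 3
      - y 0*z 1*x 2*w 3
      - z 0*w 1*x 2*y 3
      + z 0*w 1*y 2*x 3
      + z 0*x 1*w 2*y 3
      - z 0*x 1*y 2*w 3
      - z 0*y 1*w 2*x 3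
      + z 0*y 1*x 2*w 3 := by
  rw [det4, det_fin_four']
  norm_num [Matrix.cons_val]
  rfl

private lemma det4_span12 (w x y : Fin 4 → ℝ) (s t : ℝ) : det4 w x (s•w+t•x) y = 0 := by
  simp only [det4_eq, Pi.add_apply, Pi.smul_apply, smul_eq_mul]; ring

private lemma det4_span23 (w y z : Fin 4 → ℝ) (s t : ℝ) : det4 w y z (s•y+t•z) = 0 := by
  simp only [det4_eq, Pi.add_apply, Pi.smul_apply, smul_eq_mul]; ring

private lemma exists_coords (a1 a2 b1 b2 : Fin 4 → ℝ) (hD : det4 a1 a2 b1 b2 ≠ 0)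
    (x : Fin 4 → ℝ) : ∃ s t u v : ℝ, x = s•a1+t•a2+u•b1+v•b2 := by
  set M : Matrix (Fin 4) (Fin 4) ℝ := Matrix.of fun i j => ![a1, a2, b1, b2] j i with hM
  have hdet : IsUnit M.det := isUnit_iff_ne_zero.mpr hD
  refine ⟨(Matrix.mulVec M⁻¹ x) 0, (Matrix.mulVec M⁻¹ x) 1,
    (Matrix.mulVec M⁻¹ x) 2, (Matrix.mulVec M⁻¹ x) 3, ?_⟩
  have h : Matrix.mulVec M (Matrix.mulVec M⁻¹ x) = x := by
    rw [Matrix.mulVec_mulVec, Matrix.mul_nonsing_inv _ hdet, Matrix.one_mulVec]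
  conv_lhs => rw [← h]
  funext i
  simp [hM, Matrix.mulVec, dotProduct, Fin.sum_univ_four, mul_comm]

/-- **The unique quadric through three pairwise skew lines.**
Let `A = span(a₁,a₂)`, `B = span(b₁,b₂)`, `C = span(c₁,c₂)` be 2-dimensional subspaces of
`ℝ⁴`.  The quadratic form `Q(x) := ⟨a₁ a₂ x b₁⟩⟨b₂ c₁ c₂ x⟩ − ⟨a₁ a₂ x b₂⟩⟨b₁ c₁ c₂ x⟩`
vanishes on `A ∪ B ∪ C`.  Moreover, if the three lines are pairwise skew then `Q` is not
identically zero, and every quadratic form on `ℝ⁴` vanishing identically on `A ∪ B ∪ C`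
is a scalar multiple of `Q`. -/
theorem unique_quadric_through_three_skew_lines
    (a1 a2 b1 b2 c1 c2 : Fin 4 → ℝ)
    (hA : Module.finrank ℝ (Submodule.span ℝ {a1, a2}) = 2)
    (hB : Module.finrank ℝ (Submodule.span ℝ {b1, b2}) = 2)
    (hC : Module.finrank ℝ (Submodule.span ℝ {c1, c2}) = 2) :
    (∀ x : Fin 4 → ℝ,
      (x ∈ Submodule.span ℝ {a1, a2} ∨ x ∈ Submodule.span ℝ {b1, b2} ∨
        x ∈ Submodule.span ℝ {c1, c2}) →
      quadThreeLines a1 a2 b1 b2 c1 c2 x = 0) ∧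
    ((det4 a1 a2 b1 b2 ≠ 0 ∧ det4 a1 a2 c1 c2 ≠ 0 ∧ det4 b1 b2 c1 c2 ≠ 0) →
      (∃ x : Fin 4 → ℝ, quadThreeLines a1 a2 b1 b2 c1 c2 x ≠ 0) ∧
      ∀ P : QuadraticForm ℝ (Fin 4 → ℝ),
        (∀ x : Fin 4 → ℝ,
          (x ∈ Submodule.span ℝ {a1, a2} ∨ x ∈ Submodule.span ℝ {b1, b2} ∨
            x ∈ Submodule.span ℝ {c1, c2}) → P x = 0) →
        ∃ c : ℝ, ∀ x : Fin 4 → ℝ, P x = c * quadThreeLines a1 a2 b1 b2 c1 c2 x) := by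
  constructor
  · rintro x (hx | hx | hx)
    · rw [Submodule.mem_span_pair] at hx
      obtain ⟨s, t, rfl⟩ := hx
      rw [quadThreeLines, det4_span12, det4_span12]
      ring
    · rw [Submodule.mem_span_pair] at hx
      obtain ⟨s, t, rfl⟩ := hx
      have h1 : det4 a1 a2 (s•b1+t•b2) b1 = -(t * det4 a1 a2 b1 b2) := by
        simp only [det4_eq, Pi.add_apply, Pi.smul_apply, smul_eq_mul]; ring
      have h2 : det4 a1 a2 (s•b1+t•b2) b2 = s * det4 a1 a2 b1 b2 := by
        simp only [det4_eq, Pi.add_apply, Pi.smul_apply, smul_eq_mul]; ring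
      have h3 : det4 b2 c1 c2 (s•b1+t•b2) = -(s * det4 b1 c1 c2 b2) := by
        simp only [det4_eq, Pi.add_apply, Pi.smul_apply, smul_eq_mul]; ring
      have h4 : det4 b1 c1 c2 (s•b1+t•b2) = t * det4 b1 c1 c2 b2 := by
        simp only [det4_eq, Pi.add_apply, Pi.smul_apply, smul_eq_mul]; ring
      rw [quadThreeLines, h1, h2, h3, h4]; ring
    · rw [Submodule.mem_span_pair] at hx
      obtain ⟨s, t, rfl⟩ := hx
      rw [quadThreeLines, det4_span23, det4_span23]
      ring
  · rintro ⟨hAB, hAC, hBC⟩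
    obtain ⟨α11, α12, β11, β12, hc1⟩ := exists_coords a1 a2 b1 b2 hAB c1
    obtain ⟨α21, α22, β21, β22, hc2⟩ := exists_coords a1 a2 b1 b2 hAB c2
    have hda : (α11*α22-α12*α21) ≠ 0 := by
      intro h
      apply hBC
      have hd : det4 b1 b2 c1 c2 = (α11*α22-α12*α21) * (det4 a1 a2 b1 b2) := by
        rw [hc1, hc2]; simp only [det4_eq, Pi.add_apply, Pi.smul_apply, smul_eq_mul]; ring
      rw [hd, h, zero_mul]
    have hdb : (β11*β22-β12*β21) ≠ 0 := by
      intro h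
      apply hAC
      have hd : det4 a1 a2 c1 c2 = (β11*β22-β12*β21) * (det4 a1 a2 b1 b2) := by
        rw [hc1, hc2]; simp only [det4_eq, Pi.add_apply, Pi.smul_apply, smul_eq_mul]; ring
      rw [hd, h, zero_mul]
    have hf1 : det4 b1 c1 c2 a1 = (α12*β22-α22*β12) * (det4 a1 a2 b1 b2) := by
      rw [hc1, hc2]; simp only [det4_eq, Pi.add_apply, Pi.smul_apply, smul_eq_mul]; ring
    have he1 : det4 b2 c1 c2 a1 = (α22*β11-α12*β21) * (det4 a1 a2 b1 b2) := by
      rw [hc1, hc2]; simp only [det4_eq, Pi.add_apply, Pi.smul_apply, smul_eq_mul]; ring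
    have hf2 : det4 b1 c1 c2 a2 = (α21*β12-α11*β22) * (det4 a1 a2 b1 b2) := by
      rw [hc1, hc2]; simp only [det4_eq, Pi.add_apply, Pi.smul_apply, smul_eq_mul]; ring
    have he2 : det4 b2 c1 c2 a2 = (α11*β21-α21*β11) * (det4 a1 a2 b1 b2) := by
      rw [hc1, hc2]; simp only [det4_eq, Pi.add_apply, Pi.smul_apply, smul_eq_mul]; ring
    have hQexp : ∀ s t u v : ℝ, quadThreeLines a1 a2 b1 b2 c1 c2 (s•a1+t•a2+u•b1+v•b2) =
        -(det4 a1 a2 b1 b2) * (s*u*det4 b1 c1 c2 a1 + s*v*det4 b2 c1 c2 a1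
          + t*u*det4 b1 c1 c2 a2 + t*v*det4 b2 c1 c2 a2) := by
      intro s t u v
      have h1 : det4 a1 a2 (s•a1+t•a2+u•b1+v•b2) b1 = -(v * (det4 a1 a2 b1 b2)) := by
        simp only [det4_eq, Pi.add_apply, Pi.smul_apply, smul_eq_mul]; ring
      have h2 : det4 a1 a2 (s•a1+t•a2+u•b1+v•b2) b2 = u * (det4 a1 a2 b1 b2) := by
        simp only [det4_eq, Pi.add_apply, Pi.smul_apply, smul_eq_mul]; ring
      have h3 : det4 b2 c1 c2 (s•a1+t•a2+u•b1+v•b2)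
          = s*det4 b2 c1 c2 a1 + t*det4 b2 c1 c2 a2 - u*det4 b1 c1 c2 b2 := by
        simp only [det4_eq, Pi.add_apply, Pi.smul_apply, smul_eq_mul]; ring
      have h4 : det4 b1 c1 c2 (s•a1+t•a2+u•b1+v•b2)
          = s*det4 b1 c1 c2 a1 + t*det4 b1 c1 c2 a2 + v*det4 b1 c1 c2 b2 := by
        simp only [det4_eq, Pi.add_apply, Pi.smul_apply, smul_eq_mul]; ring
      rw [quadThreeLines, h1, h2, h3, h4]; ring
    have hQc : ∀ s t u v : ℝ, quadThreeLines a1 a2 b1 b2 c1 c2 (s•a1+t•a2+u•b1+v•b2) =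
        -((det4 a1 a2 b1 b2)^2) * (s*u*(α12*β22-α22*β12) + s*v*(α22*β11-α12*β21)
          + t*u*(α21*β12-α11*β22) + t*v*(α11*β21-α21*β11)) := by
      intro s t u v
      rw [hQexp, hf1, he1, hf2, he2]; ring
    constructor
    · refine ⟨α11•a1+α12•a2+β21•b1+β22•b2, ?_⟩
      rw [hQc]
      have hrw : -((det4 a1 a2 b1 b2)^2) * (α11*β21*(α12*β22-α22*β12) + α11*β22*(α22*β11-α12*β21)
          + α12*β21*(α21*β12-α11*β22) + α12*β22*(α11*β21-α21*β11))
          = -((det4 a1 a2 b1 b2)^2 * ((α11*α22-α12*α21)*(β11*β22-β12*β21))) := by ring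
      rw [hrw]
      exact neg_ne_zero.mpr (mul_ne_zero (pow_ne_zero 2 hAB) (mul_ne_zero hda hdb))
    · intro P hP
      have hmemA : ∀ x ∈ Submodule.span ℝ {a1, a2}, P x = 0 := fun x hx => hP x (Or.inl hx)
      have hmemB : ∀ x ∈ Submodule.span ℝ {b1, b2}, P x = 0 := fun x hx => hP x (Or.inr (Or.inl hx))
      have hmemC : ∀ x ∈ Submodule.span ℝ {c1, c2}, P x = 0 := fun x hx => hP x (Or.inr (Or.inr hx))
      have ha1 : P a1 = 0 := hmemA a1 (Submodule.subset_span (by simp))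
      have ha2 : P a2 = 0 := hmemA a2 (Submodule.subset_span (by simp))
      have hb1 : P b1 = 0 := hmemB b1 (Submodule.subset_span (by simp))
      have hb2 : P b2 = 0 := hmemB b2 (Submodule.subset_span (by simp))
      have hcc1 : P c1 = 0 := hmemC c1 (Submodule.subset_span (by simp))
      have hcc2 : P c2 = 0 := hmemC c2 (Submodule.subset_span (by simp))
      have ha12 : P (a1 + a2) = 0 := hmemA _ (Submodule.add_mem _
        (Submodule.subset_span (by simp)) (Submodule.subset_span (by simp)))
      have hb12 : P (b1 + b2) = 0 := hmemB _ (Submodule.add_mem _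
        (Submodule.subset_span (by simp)) (Submodule.subset_span (by simp)))
      have hcc12 : P (c1 + c2) = 0 := hmemC _ (Submodule.add_mem _
        (Submodule.subset_span (by simp)) (Submodule.subset_span (by simp)))
      have hpolA : QuadraticMap.polar P a1 a2 = 0 := by
        simp [QuadraticMap.polar, ha1, ha2, ha12]
      have hpolB : QuadraticMap.polar P b1 b2 = 0 := by
        simp [QuadraticMap.polar, hb1, hb2, hb12]
      have key : ∀ x y : Fin 4 → ℝ, P (x + y) = P x + P y + QuadraticMap.polar P x y := by
        intro x y
        simp [QuadraticMap.polar]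
      have hPexp : ∀ s t u v : ℝ, P (s•a1+t•a2+u•b1+v•b2) =
          s*u*(QuadraticMap.polar P a1 b1) + s*v*(QuadraticMap.polar P a1 b2) + t*u*(QuadraticMap.polar P a2 b1) + t*v*(QuadraticMap.polar P a2 b2) := by
        intro s t u v
        rw [add_assoc, key, key, key]
        simp [QuadraticMap.map_smul, QuadraticMap.polar_smul_left, QuadraticMap.polar_smul_right,
          QuadraticMap.polar_add_left, QuadraticMap.polar_add_right,
          ha1, ha2, hb1, hb2, hpolA, hpolB, smul_eq_mul]
        ring
      have hn11 : α11*β11*(QuadraticMap.polar P a1 b1) + α11*β12*(QuadraticMap.polar P a1 b2) + α12*β11*(QuadraticMap.polar P a2 b1) + α12*β12*(QuadraticMap.polar P a2 b2) = 0 := by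
        have h := hcc1
        rw [hc1, hPexp] at h
        exact h
      have hn22 : α21*β21*(QuadraticMap.polar P a1 b1) + α21*β22*(QuadraticMap.polar P a1 b2) + α22*β21*(QuadraticMap.polar P a2 b1) + α22*β22*(QuadraticMap.polar P a2 b2) = 0 := by
        have h := hcc2
        rw [hc2, hPexp] at h
        exact h
      have hn33 : (α11+α21)*(β11+β21)*(QuadraticMap.polar P a1 b1) + (α11+α21)*(β12+β22)*(QuadraticMap.polar P a1 b2)
          + (α12+α22)*(β11+β21)*(QuadraticMap.polar P a2 b1) + (α12+α22)*(β12+β22)*(QuadraticMap.polar P a2 b2) = 0 := by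
        have h := hcc12
        rw [hc1, hc2] at h
        have hrw : (α11•a1+α12•a2+β11•b1+β12•b2) + (α21•a1+α22•a2+β21•b1+β22•b2)
            = (α11+α21)•a1+(α12+α22)•a2+(β11+β21)•b1+(β12+β22)•b2 := by
          module
        rw [hrw, hPexp] at h
        exact h
      have k11 : (α11*α22-α12*α21)*(β11*β22-β12*β21) * (QuadraticMap.polar P a1 b1) = (α11*β21*(QuadraticMap.polar P a1 b1) + α11*β22*(QuadraticMap.polar P a1 b2) + α12*β21*(QuadraticMap.polar P a2 b1) + α12*β22*(QuadraticMap.polar P a2 b2)) * (α12*β22-α22*β12) := by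
        linear_combination (α22*β22 - (-(α12*β22)))*hn11 + (α12*β12 - (-(α12*β22)))*hn22 + (-(α12*β22))*hn33
      have k12 : (α11*α22-α12*α21)*(β11*β22-β12*β21) * (QuadraticMap.polar P a1 b2) = (α11*β21*(QuadraticMap.polar P a1 b1) + α11*β22*(QuadraticMap.polar P a1 b2) + α12*β21*(QuadraticMap.polar P a2 b1) + α12*β22*(QuadraticMap.polar P a2 b2)) * (α22*β11-α12*β21) := by
        linear_combination ((-(α22*β21)) - (α12*β21))*hn11 + ((-(α12*β11)) - (α12*β21))*hn22 + (α12*β21)*hn33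
      have k21 : (α11*α22-α12*α21)*(β11*β22-β12*β21) * (QuadraticMap.polar P a2 b1) = (α11*β21*(QuadraticMap.polar P a1 b1) + α11*β22*(QuadraticMap.polar P a1 b2) + α12*β21*(QuadraticMap.polar P a2 b1) + α12*β22*(QuadraticMap.polar P a2 b2)) * (α21*β12-α11*β22) := by
        linear_combination ((-(α21*β22)) - (α11*β22))*hn11 + ((-(α11*β12)) - (α11*β22))*hn22 + (α11*β22)*hn33
      have k22 : (α11*α22-α12*α21)*(β11*β22-β12*β21) * (QuadraticMap.polar P a2 b2) = (α11*β21*(QuadraticMap.polar P a1 b1) + α11*β22*(QuadraticMap.polar P a1 b2) + α12*β21*(QuadraticMap.polar P a2 b1) + α12*β22*(QuadraticMap.polar P a2 b2)) * (α11*β21-α21*β11) := by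
        linear_combination (α21*β21 - (-(α11*β21)))*hn11 + (α11*β11 - (-(α11*β21)))*hn22 + (-(α11*β21))*hn33
      have hm0 : -((det4 a1 a2 b1 b2)^2 * ((α11*α22-α12*α21)*(β11*β22-β12*β21))) ≠ 0 :=
        neg_ne_zero.mpr (mul_ne_zero (pow_ne_zero 2 hAB) (mul_ne_zero hda hdb))
      refine ⟨(α11*β21*(QuadraticMap.polar P a1 b1) + α11*β22*(QuadraticMap.polar P a1 b2) + α12*β21*(QuadraticMap.polar P a2 b1) + α12*β22*(QuadraticMap.polar P a2 b2)) / (-((det4 a1 a2 b1 b2)^2 * ((α11*α22-α12*α21)*(β11*β22-β12*β21)))), ?_⟩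
      intro x
      obtain ⟨s, t, u, v, rfl⟩ := exists_coords a1 a2 b1 b2 hAB x
      rw [hPexp, hQc, div_mul_eq_mul_div, eq_div_iff hm0]
      linear_combination (-((det4 a1 a2 b1 b2)^2*s*u)) * k11 + (-((det4 a1 a2 b1 b2)^2*s*v)) * k12
        + (-((det4 a1 a2 b1 b2)^2*t*u)) * k21 + (-((det4 a1 a2 b1 b2)^2*t*v)) * k22
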